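/- For a > 0, the improper integral ∫_{0}^{∞} sin(a x²) cos(s x) dx converges for every real s and equals (1/2)·√(π/(2a))·(cos(s²/(4a)) − sin(s²/(4a))). -/

import Mathlib

/-!
Completing the square, `sin (a x²) cos (s x)` is the average of `sin (a (x ± c)² - d)` with
`c = s / 2a`, `d = s² / 4a`. Since `u ↦ sin (a u² - d)` is even, the sum of its shifts by `±c` has
twice its improper integral over `[0, ∞)`, and that integral is the imaginary part of
`e^{-id} ∫₀^∞ e^{i a x²} dx = e^{-id} √(π / 2a) (1 + i) / 2`.

This Fresnel integral is the boundary case `re b = 0` of `∫₀^∞ e^{-b x²} dx = √(π / b) / 2`.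
After an integration by parts on `[1, ∞)` the improper integral is given by an expression
that is continuous on `{re b ≥ 0} \ {0}`; it agrees with the Gaussian integral on `re b > 0`, hence
everywhere on that set.
-/

open Filter Real MeasureTheory Set
open scoped Topology Complex
open Complex (I)

lemma norm_cexp_neg_mul_sq_le_one {b : ℂ} (hb : 0 ≤ b.re) (x : ℝ) :
    ‖cexp (-b * x ^ 2)‖ ≤ 1 := by
  rw [Complex.norm_exp, Real.exp_le_one_iff]
  have hre : (-b * (x : ℂ) ^ 2).re = -b.re * x ^ 2 := by
    simp [← Complex.ofReal_pow]
  rw [hre]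
  nlinarith [sq_nonneg x]

lemma norm_cexp_neg_mul_sq_div_le {b : ℂ} (hb : 0 ≤ b.re) (x : ℝ) :
    ‖cexp (-b * x ^ 2) / (2 * b * x ^ 2)‖ ≤ (2 * ‖b‖)⁻¹ * (x ^ 2)⁻¹ := by
  calc ‖cexp (-b * x ^ 2) / (2 * b * x ^ 2)‖ ≤ 1 / ‖2 * b * (x : ℂ) ^ 2‖ := by
        rw [norm_div]
        exact div_le_div_of_nonneg_right (norm_cexp_neg_mul_sq_le_one hb x) (norm_nonneg _)
    _ = (2 * ‖b‖)⁻¹ * (x ^ 2)⁻¹ := by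
        simp only [one_div, mul_inv_rev, Complex.norm_mul, Complex.norm_ofNat, norm_pow,
          Complex.norm_real, norm_eq_abs, sq_abs]
        ring

lemma integrableOn_Ioi_inv_sq : IntegrableOn (fun x : ℝ => (x ^ 2)⁻¹) (Ioi 1) := by
  refine (integrableOn_Ioi_rpow_of_lt (by norm_num : (-2 : ℝ) < -1) one_pos).congr_fun
    (fun x hx => ?_) measurableSet_Ioi
  simp [Real.rpow_neg (zero_le_one.trans (le_of_lt hx))]

lemma integrableOn_cexp_neg_mul_sq_div_Ioi {b : ℂ} (hb : 0 ≤ b.re) :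
    IntegrableOn (fun x : ℝ => cexp (-b * x ^ 2) / (2 * b * x ^ 2)) (Ioi 1) :=
  (integrableOn_Ioi_inv_sq.const_mul _).mono' (Measurable.aestronglyMeasurable (by fun_prop))
    (Eventually.of_forall (norm_cexp_neg_mul_sq_div_le hb))

lemma hasDerivAt_cexp_neg_mul_sq_div {b : ℂ} (hb : b ≠ 0) {x : ℝ} (hx : x ≠ 0) :
    HasDerivAt (fun y : ℝ => -cexp (-b * y ^ 2) / (2 * b * y))
      (cexp (-b * x ^ 2) + cexp (-b * x ^ 2) / (2 * b * x ^ 2)) x := by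
  have hx' : (x : ℂ) ≠ 0 := Complex.ofReal_ne_zero.2 hx
  have hexp : HasDerivAt (fun y : ℝ => cexp (-b * y ^ 2))
      (cexp (-b * x ^ 2) * (-b * (2 * x))) x := by
    simpa using ((Complex.ofRealCLM.hasDerivAt (x := x)).pow 2).const_mul (-b) |>.cexp
  have hden : HasDerivAt (fun y : ℝ => 2 * b * (y : ℂ)) (2 * b) x := by
    simpa using (Complex.ofRealCLM.hasDerivAt (x := x)).const_mul (2 * b)
  refine (hexp.neg.div hden (by simp [hb, hx'])).congr_deriv ?_
  simp only [Pi.neg_apply]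
  field_simp
  ring

lemma integral_one_cexp_neg_mul_sq_eq_by_parts {b : ℂ} (hb : b ≠ 0) {R : ℝ} (hR : 0 < R) :
    ∫ x in (1 : ℝ)..R, cexp (-b * x ^ 2)
      = cexp (-b) / (2 * b) - cexp (-b * R ^ 2) / (2 * b * R)
        - ∫ x in (1 : ℝ)..R, cexp (-b * x ^ 2) / (2 * b * x ^ 2) := by
  have hne : ∀ x ∈ uIcc (1 : ℝ) R, x ≠ 0 := fun x hx => (lt_min one_pos hR |>.trans_le hx.1).ne'
  have hexp : IntervalIntegrable (fun x : ℝ => cexp (-b * x ^ 2)) volume 1 R :=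
    (by fun_prop : Continuous _).intervalIntegrable _ _
  have hquot :
      IntervalIntegrable (fun x : ℝ => cexp (-b * x ^ 2) / (2 * b * x ^ 2)) volume 1 R :=
    ContinuousOn.intervalIntegrable <| ContinuousOn.div (by fun_prop) (by fun_prop)
      fun x hx => by simp [hb, hne x hx]
  have hftc := intervalIntegral.integral_eq_sub_of_hasDerivAt
    (fun x hx => hasDerivAt_cexp_neg_mul_sq_div hb (hne x hx)) (hexp.add hquot)
  rw [intervalIntegral.integral_add hexp hquot] at hftc
  push_cast [one_pow, mul_one] at hftc
  linear_combination hftc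

/-- `∫₀^∞ exp (-b x²) dx`, integrated by parts on `[1, ∞)` so that the tail converges absolutely
also on the boundary `re b = 0`. -/
noncomputable def improperGaussianIntegral (b : ℂ) : ℂ :=
  (∫ x in (0 : ℝ)..1, cexp (-b * x ^ 2)) + cexp (-b) / (2 * b)
    - ∫ x in Ioi (1 : ℝ), cexp (-b * x ^ 2) / (2 * b * x ^ 2)

lemma tendsto_cexp_neg_mul_sq_div_atTop {b : ℂ} (hb : 0 ≤ b.re) :
    Tendsto (fun R : ℝ => cexp (-b * R ^ 2) / (2 * b * R)) atTop (𝓝 0) := by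
  refine squeeze_zero_norm' (a := fun R => (2 * ‖b‖)⁻¹ * R⁻¹) ?_
    (by simpa using tendsto_inv_atTop_zero.const_mul (2 * ‖b‖)⁻¹)
  filter_upwards [eventually_gt_atTop 0] with R hR
  calc ‖cexp (-b * R ^ 2) / (2 * b * R)‖ ≤ 1 / ‖2 * b * (R : ℂ)‖ := by
        rw [norm_div]
        exact div_le_div_of_nonneg_right (norm_cexp_neg_mul_sq_le_one hb R) (norm_nonneg _)
    _ = (2 * ‖b‖)⁻¹ * R⁻¹ := by
        simp only [one_div, mul_inv_rev, Complex.norm_mul, Complex.norm_ofNat, Complex.norm_real,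
          norm_eq_abs, abs_of_pos hR]
        ring

lemma tendsto_integral_cexp_neg_mul_sq_improperGaussianIntegral {b : ℂ} (hb : 0 ≤ b.re)
    (hb0 : b ≠ 0) :
    Tendsto (fun R : ℝ => ∫ x in (0 : ℝ)..R, cexp (-b * x ^ 2)) atTop
      (𝓝 (improperGaussianIntegral b)) := by
  have htail := intervalIntegral_tendsto_integral_Ioi 1
    (integrableOn_cexp_neg_mul_sq_div_Ioi hb) tendsto_id
  have hlim := ((tendsto_cexp_neg_mul_sq_div_atTop hb).const_sub
    ((∫ x in (0 : ℝ)..1, cexp (-b * x ^ 2)) + cexp (-b) / (2 * b))).sub htail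
  rw [sub_zero] at hlim
  refine hlim.congr' ?_
  filter_upwards [eventually_gt_atTop 0] with R hR
  have hcont : Continuous fun x : ℝ => cexp (-b * x ^ 2) := by fun_prop
  rw [← intervalIntegral.integral_add_adjacent_intervals (hcont.intervalIntegrable 0 1)
    (hcont.intervalIntegrable 1 R), integral_one_cexp_neg_mul_sq_eq_by_parts hb0 hR]
  simp only [id]
  ring

lemma improperGaussianIntegral_eq_of_re_pos {b : ℂ} (hb : 0 < b.re) :
    improperGaussianIntegral b = (π / b) ^ (1 / 2 : ℂ) / 2 := by
  refine tendsto_nhds_unique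
    (tendsto_integral_cexp_neg_mul_sq_improperGaussianIntegral hb.le ?_) ?_
  · rintro rfl
    simp at hb
  · rw [← integral_gaussian_complex_Ioi hb]
    exact intervalIntegral_tendsto_integral_Ioi 0 (integrable_cexp_neg_mul_sq hb).integrableOn
      tendsto_id

lemma continuousWithinAt_integral_cexp_neg_mul_sq_div_Ioi {b : ℂ} (hb0 : b ≠ 0) :
    ContinuousWithinAt (fun z : ℂ => ∫ x in Ioi (1 : ℝ), cexp (-z * x ^ 2) / (2 * z * x ^ 2))
      {z | 0 ≤ z.re} b := by
  have hnorm : ∀ᶠ z in 𝓝[{z | 0 ≤ z.re}] b, 0 ≤ z.re ∧ ‖b‖ / 2 < ‖z‖ :=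
    Eventually.and self_mem_nhdsWithin <|
      ((continuous_norm.tendsto b).mono_left nhdsWithin_le_nhds).eventually_const_lt
        (half_lt_self (norm_pos_iff.2 hb0))
  refine continuousWithinAt_of_dominated (bound := fun x : ℝ => ‖b‖⁻¹ * (x ^ 2)⁻¹)
    (Eventually.of_forall fun z => Measurable.aestronglyMeasurable (by fun_prop)) ?_
    (integrableOn_Ioi_inv_sq.const_mul _) ?_
  · filter_upwards [hnorm] with z ⟨hzre, hz⟩
    refine Eventually.of_forall fun x => (norm_cexp_neg_mul_sq_div_le hzre x).trans ?_
    gcongr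
    linarith
  · refine ae_restrict_of_forall_mem measurableSet_Ioi fun x (hx : 1 < x) => ?_
    refine ContinuousAt.continuousWithinAt (ContinuousAt.div (by fun_prop) (by fun_prop) ?_)
    simp [hb0, (zero_lt_one.trans hx).ne']

lemma continuousWithinAt_improperGaussianIntegral {b : ℂ} (hb0 : b ≠ 0) :
    ContinuousWithinAt improperGaussianIntegral {z | 0 ≤ z.re} b := by
  have hhead : Continuous fun z : ℂ => ∫ x in (0 : ℝ)..1, cexp (-z * x ^ 2) :=
    intervalIntegral.continuous_parametric_intervalIntegral_of_continuous' (by fun_prop) 0 1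
  have hbdry : ContinuousAt (fun z : ℂ => cexp (-z) / (2 * z)) b :=
    ContinuousAt.div (by fun_prop) (by fun_prop) (by simp [hb0])
  exact (hhead.continuousWithinAt.add hbdry.continuousWithinAt).sub
    (continuousWithinAt_integral_cexp_neg_mul_sq_div_Ioi hb0)

lemma ofReal_div_mem_slitPlane {r : ℝ} (hr : 0 < r) {z : ℂ} (hz : 0 ≤ z.re) (hz0 : z ≠ 0) :
    (r : ℂ) / z ∈ Complex.slitPlane := by
  have hn : 0 < Complex.normSq z := Complex.normSq_pos.2 hz0
  rw [Complex.mem_slitPlane_iff, Complex.div_re, Complex.div_im]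
  simp only [Complex.ofReal_re, Complex.ofReal_im, zero_mul]
  rcases hz.lt_or_eq with hz | hz
  · left
    positivity
  · right
    have him : z.im ≠ 0 := fun h => hz0 (Complex.ext hz.symm h)
    field_simp
    simp [hr.ne', him, hz0]

lemma improperGaussianIntegral_eq {b : ℂ} (hb : 0 ≤ b.re) (hb0 : b ≠ 0) :
    improperGaussianIntegral b = (π / b) ^ (1 / 2 : ℂ) / 2 := by
  refine Set.EqOn.of_subset_closure (f := improperGaussianIntegral)
    (g := fun z => (π / z) ^ (1 / 2 : ℂ) / 2) (s := {z | 0 < z.re}) (t := {z | 0 ≤ z.re ∧ z ≠ 0})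
    (fun z hz => improperGaussianIntegral_eq_of_re_pos hz) ?_ ?_ ?_ ?_ ⟨hb, hb0⟩
  · exact fun z hz => (continuousWithinAt_improperGaussianIntegral hz.2).mono fun w hw => hw.1
  · refine fun z hz => ContinuousAt.continuousWithinAt ?_
    exact (((continuousAt_cpow_const (ofReal_div_mem_slitPlane pi_pos hz.1 hz.2)).comp
      (continuousAt_const.div continuousAt_id hz.2))).div_const 2
  · exact fun z (hz : 0 < z.re) => ⟨hz.le, fun h => by simp [h] at hz⟩
  · rw [Complex.closure_setOfPred_lt_re]
    exact fun z hz => hz.1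

theorem tendsto_integral_cexp_neg_mul_sq {b : ℂ} (hb : 0 ≤ b.re) (hb0 : b ≠ 0) :
    Tendsto (fun R : ℝ => ∫ x in (0 : ℝ)..R, cexp (-b * x ^ 2)) atTop
      (𝓝 ((π / b) ^ (1 / 2 : ℂ) / 2)) :=
  improperGaussianIntegral_eq hb hb0 ▸
    tendsto_integral_cexp_neg_mul_sq_improperGaussianIntegral hb hb0

lemma cpow_pi_div_neg_mul_I {a : ℝ} (ha : 0 < a) :
    ((π : ℂ) / -(a * I)) ^ (1 / 2 : ℂ) = √(π / (2 * a)) * (1 + I) := by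
  have hsq : ((√(π / (2 * a)) : ℂ) * (1 + I)) ^ 2 = (π : ℂ) / -(a * I) := by
    have hs : ((√(π / (2 * a)) : ℂ)) ^ 2 = ((π / (2 * a) : ℝ) : ℂ) := by
      rw [← Complex.ofReal_pow, Real.sq_sqrt (by positivity)]
    have ha' : (a : ℂ) ≠ 0 := Complex.ofReal_ne_zero.2 ha.ne'
    have hI : (1 + I) ^ 2 * -(a * I) = 2 * a := by
      linear_combination (-2 * (a : ℂ) - a * I) * Complex.I_sq
    rw [eq_div_iff (by simp [ha']), mul_pow, hs, mul_assoc, hI]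
    push_cast
    field_simp
  rw [← hsq, one_div, Complex.sq_cpow_two_inv]
  simpa using Real.sqrt_pos.2 (by positivity : 0 < π / (2 * a))

theorem tendsto_integral_cexp_mul_sq_mul_I {a : ℝ} (ha : 0 < a) :
    Tendsto (fun R : ℝ => ∫ x in (0 : ℝ)..R, cexp (a * x ^ 2 * I)) atTop
      (𝓝 (√(π / (2 * a)) / 2 * (1 + I))) := by
  have hgauss := tendsto_integral_cexp_neg_mul_sq (b := -(a * I)) (by simp) (by simp [ha.ne'])
  rw [cpow_pi_div_neg_mul_I ha] at hgauss
  convert hgauss using 2 with R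
  · congr 1 with x
    ring_nf
  · ring

theorem tendsto_integral_cexp_mul_sq_sub_mul_I {a : ℝ} (ha : 0 < a) (d : ℝ) :
    Tendsto (fun R : ℝ => ∫ x in (0 : ℝ)..R, cexp ((a * x ^ 2 - d : ℝ) * I)) atTop
      (𝓝 (cexp ((-d : ℝ) * I) * (√(π / (2 * a)) / 2 * (1 + I)))) := by
  refine ((tendsto_integral_cexp_mul_sq_mul_I ha).const_mul _).congr fun R => ?_
  rw [← intervalIntegral.integral_const_mul]
  congr 1 with x
  rw [← Complex.exp_add]
  push_cast
  ring_nf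

theorem tendsto_integral_comp_add_add_comp_sub_of_even {E : Type*} [NormedAddCommGroup E]
    [NormedSpace ℝ E] {f : ℝ → E} (hf : Continuous f) (heven : ∀ x, f (-x) = f x) {L : E}
    (hL : Tendsto (fun R => ∫ x in (0 : ℝ)..R, f x) atTop (𝓝 L)) (c : ℝ) :
    Tendsto (fun R => ∫ x in (0 : ℝ)..R, (f (x + c) + f (x - c))) atTop (𝓝 (L + L)) := by
  have hint : ∀ u v : ℝ, IntervalIntegrable f volume u v := hf.intervalIntegrable
  have hsym : ∫ x in -c..0, f x = ∫ x in (0 : ℝ)..c, f x := by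
    simpa [heven] using (intervalIntegral.integral_comp_neg (a := 0) (b := c) f).symm
  have hsplit : ∀ R, ∫ x in (0 : ℝ)..R, (f (x + c) + f (x - c))
      = (∫ x in (0 : ℝ)..R + c, f x) + ∫ x in (0 : ℝ)..R - c, f x := by
    intro R
    have hplus : IntervalIntegrable (fun x => f (x + c)) volume 0 R :=
      (hf.comp (continuous_add_const c)).intervalIntegrable _ _
    have hminus : IntervalIntegrable (fun x => f (x - c)) volume 0 R :=
      (hf.comp (continuous_sub_right c)).intervalIntegrable _ _
    rw [intervalIntegral.integral_add hplus hminus,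
      intervalIntegral.integral_comp_add_right, intervalIntegral.integral_comp_sub_right, zero_add,
      zero_sub, ← intervalIntegral.integral_add_adjacent_intervals (hint (-c) 0) (hint 0 (R - c)),
      hsym, ← intervalIntegral.integral_add_adjacent_intervals (hint 0 c) (hint c (R + c))]
    abel
  simp_rw [hsplit]
  exact (hL.comp (tendsto_atTop_add_const_right _ c tendsto_id)).add
    (hL.comp (tendsto_atTop_add_const_right _ (-c) tendsto_id))

lemma sin_mul_sq_mul_cos_eq_half_add {a : ℝ} (ha : a ≠ 0) (s x : ℝ) :
    sin (a * x ^ 2) * cos (s * x) = (sin (a * (x + s / (2 * a)) ^ 2 - s ^ 2 / (4 * a))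
      + sin (a * (x - s / (2 * a)) ^ 2 - s ^ 2 / (4 * a))) / 2 := by
  have hplus : a * (x + s / (2 * a)) ^ 2 - s ^ 2 / (4 * a) = a * x ^ 2 + s * x := by
    field_simp; ring
  have hminus : a * (x - s / (2 * a)) ^ 2 - s ^ 2 / (4 * a) = a * x ^ 2 - s * x := by
    field_simp; ring
  rw [hplus, hminus, sin_add, sin_sub]
  ring

theorem stmt4 (a : ℝ) (ha : 0 < a) (s : ℝ) :
    Tendsto (fun R : ℝ => ∫ x in (0:ℝ)..R, Real.sin (a * x ^ 2) * Real.cos (s * x)) atTop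
      (nhds ((1 / 2) * Real.sqrt (π / (2 * a)) *
        (Real.cos (s ^ 2 / (4 * a)) - Real.sin (s ^ 2 / (4 * a))))) := by
  set g : ℝ → ℂ := fun u => cexp ((a * u ^ 2 - s ^ 2 / (4 * a) : ℝ) * I)
  have hshift := tendsto_integral_comp_add_add_comp_sub_of_even (f := g) (by fun_prop)
    (fun x => by simp [g]) (tendsto_integral_cexp_mul_sq_sub_mul_I ha _) (s / (2 * a))
  convert ((Complex.continuous_im.tendsto _).comp hshift).div_const 2 using 2 with R
  · have hcont : Continuous fun x => g (x + s / (2 * a)) + g (x - s / (2 * a)) := by fun_prop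
    rw [Function.comp_apply, ← Complex.imCLM_apply,
      ← Complex.imCLM.intervalIntegral_comp_comm (hcont.intervalIntegrable 0 R),
      ← intervalIntegral.integral_div]
    congr 1 with x
    simp only [g, Complex.imCLM_apply, Complex.add_im, Complex.exp_ofReal_mul_I_im,
      sin_mul_sq_mul_cos_eq_half_add ha.ne']
  · simp only [Complex.mul_im, Complex.exp_ofReal_mul_I_re, Complex.exp_ofReal_mul_I_im,
      Complex.mul_re, Complex.add_re, Complex.add_im, Complex.ofReal_re,
      Complex.ofReal_im, Complex.one_re, Complex.one_im, Complex.I_re, Complex.I_im,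
      Complex.div_ofNat_re, Complex.div_ofNat_im, cos_neg, sin_neg]
    ring
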